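/- arXiv:2109.10735 — 2 statements merged into one kernel-verified Lean document; each statement's English description precedes it below -/
import Mathlib

section
/- Let $a_0, a_1, \ldots, a_7, a_9, a_{10}$ be nonnegative integers satisfying $a_1 \geq a_2 \geq \cdots \geq a_7$ and $a_9 + a_{10} \geq a_0 \geq a_9 \geq a_{10}$, and assume that at least one of these integers is odd. Then one of the following holds: (i) there exist three distinct indices $k, l, m \in \{1, \ldots, 7\}$ and $i \in \{9, 10\}$ such that $a_i + a_k + a_l + a_m$ is odd; (ii) $a_0 > 0$ is odd and all of $a_1, \ldots, a_7, a_9, a_{10}$ are even; (iii) $a_0 > 0$ and all of $a_1, \ldots, a_7, a_9, a_{10}$ are odd. -/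
/-!
If no sum `a i + a k + a l + a m` as in (i) is odd, then exchanging one of `k, l, m` for a fourth
index shows that `a 1, …, a 7` all have one parity, and then `a 9` and `a 10` have that parity too.
If it is odd we are in case (iii), with `a 0 ≥ a 9 > 0`; if it is even, the odd entry must be `a 0`,
which is case (ii).
-/

open Finset

lemma mod_two_eq_of_forall_even_add {s : Finset ℕ} (hs : 4 ≤ #s) (a : ℕ → ℕ) (b : ℕ)
    (h : ∀ k ∈ s, ∀ l ∈ s, ∀ m ∈ s, k ≠ l → k ≠ m → l ≠ m → Even (b + a k + a l + a m))
    {p q : ℕ} (hp : p ∈ s) (hq : q ∈ s) : a p % 2 = a q % 2 := by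
  rcases eq_or_ne p q with rfl | hpq
  · rfl
  have hcard : 1 < #(s \ {p, q}) :=
    calc 1 < #s - #{p, q} := by have := card_le_two (a := p) (b := q); omega
      _ ≤ #(s \ {p, q}) := le_card_sdiff _ _
  obtain ⟨r, hr, t, ht, hrt⟩ := one_lt_card.mp hcard
  simp only [mem_sdiff, mem_insert, mem_singleton, not_or] at hr ht
  have hpr := Nat.even_iff.mp (h p hp r hr.1 t ht.1 (Ne.symm hr.2.1) (Ne.symm ht.2.1) hrt)
  have hqr := Nat.even_iff.mp (h q hq r hr.1 t ht.1 (Ne.symm hr.2.2) (Ne.symm ht.2.2) hrt)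
  omega

lemma mod_two_eq_of_forall_even_quadruple (a : ℕ → ℕ)
    (h : ∀ k ∈ Icc 1 7, ∀ l ∈ Icc 1 7, ∀ m ∈ Icc 1 7, k ≠ l → k ≠ m → l ≠ m →
      ∀ i ∈ ({9, 10} : Finset ℕ), Even (a i + a k + a l + a m))
    (i : ℕ) (hi : i ∈ ({1,2,3,4,5,6,7,9,10} : Finset ℕ)) : a i % 2 = a 1 % 2 := by
  have hseven {p : ℕ} (hp : p ∈ Icc 1 7) : a p % 2 = a 1 % 2 :=
    mod_two_eq_of_forall_even_add (by decide) a (a 9)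
      (fun k hk l hl m hm hkl hkm hlm => h k hk l hl m hm hkl hkm hlm 9 (by decide)) hp
      (by decide)
  have hi' : i ∈ Icc 1 7 ∨ i ∈ ({9, 10} : Finset ℕ) := by
    simp only [mem_insert, mem_singleton, mem_Icc] at hi ⊢; omega
  rcases hi' with hi' | hi'
  · exact hseven hi'
  · have h123 := Nat.even_iff.mp <| h 1 (by decide) 2 (by decide) 3 (by decide)
      (by decide) (by decide) (by decide) i hi'
    have ha2 := hseven (p := 2) (by decide)
    have ha3 := hseven (p := 3) (by decide)
    omega

theorem stmt_0_general (a : ℕ → ℕ)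
    (h2 : a 0 ≥ a 9)
    (hodd : ∃ i ∈ ({0,1,2,3,4,5,6,7,9,10} : Finset ℕ), Odd (a i)) :
    (∃ k ∈ Finset.Icc 1 7, ∃ l ∈ Finset.Icc 1 7, ∃ m ∈ Finset.Icc 1 7,
      k ≠ l ∧ k ≠ m ∧ l ≠ m ∧ ∃ i ∈ ({9,10} : Finset ℕ), Odd (a i + a k + a l + a m))
    ∨ (0 < a 0 ∧ Odd (a 0) ∧ ∀ i ∈ ({1,2,3,4,5,6,7,9,10} : Finset ℕ), Even (a i))
    ∨ (0 < a 0 ∧ ∀ i ∈ ({1,2,3,4,5,6,7,9,10} : Finset ℕ), Odd (a i)) := by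
  by_cases hquad : ∃ k ∈ Finset.Icc 1 7, ∃ l ∈ Finset.Icc 1 7, ∃ m ∈ Finset.Icc 1 7,
      k ≠ l ∧ k ≠ m ∧ l ≠ m ∧ ∃ i ∈ ({9,10} : Finset ℕ), Odd (a i + a k + a l + a m)
  · exact Or.inl hquad
  simp only [not_exists, not_and, Nat.not_odd_iff_even] at hquad
  have hpar := mod_two_eq_of_forall_even_quadruple a hquad
  rcases Nat.mod_two_eq_zero_or_one (a 1) with heven | hone
  · obtain ⟨i, hi, hai⟩ := hodd
    have hi0 : i = 0 := by
      by_contra hne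
      have := hpar i (by simp only [mem_insert, mem_singleton] at hi ⊢; omega)
      have := Nat.odd_iff.mp hai
      omega
    subst hi0
    exact Or.inr <| Or.inl ⟨hai.pos, hai, fun i hi => Nat.even_iff.mpr ((hpar i hi).trans heven)⟩
  · have ha9 := hpar 9 (by decide)
    exact Or.inr <| Or.inr ⟨by omega, fun i hi => Nat.odd_iff.mpr ((hpar i hi).trans hone)⟩

theorem stmt_0 (a : ℕ → ℕ)
    (hmono : ∀ i j, 1 ≤ i → i ≤ j → j ≤ 7 → a j ≤ a i)
    (h1 : a 9 + a 10 ≥ a 0) (h2 : a 0 ≥ a 9) (h3 : a 9 ≥ a 10)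
    (hodd : ∃ i ∈ ({0,1,2,3,4,5,6,7,9,10} : Finset ℕ), Odd (a i)) :
    (∃ k ∈ Finset.Icc 1 7, ∃ l ∈ Finset.Icc 1 7, ∃ m ∈ Finset.Icc 1 7,
      k ≠ l ∧ k ≠ m ∧ l ≠ m ∧ ∃ i ∈ ({9,10} : Finset ℕ), Odd (a i + a k + a l + a m))
    ∨ (0 < a 0 ∧ Odd (a 0) ∧ ∀ i ∈ ({1,2,3,4,5,6,7,9,10} : Finset ℕ), Even (a i))
    ∨ (0 < a 0 ∧ ∀ i ∈ ({1,2,3,4,5,6,7,9,10} : Finset ℕ), Odd (a i)) :=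
  stmt_0_general a h2 hodd
end

section
/- Let $c_2, c_3, c_4, c_5, c_6, c_9, c_{10}$ be nonnegative integers with $c_2 \geq c_3 \geq c_4$ and $c_5 \geq c_6$. Set $c_7 = c_8 = 0$, and assume $c_9 + c_2 + c_3 + c_4$ is odd. Assume further the minimality condition: there exist no $i \in \{9, 10\}$ and pairwise distinct $k, l, m \in \{2, 3, \ldots, 8\}$ such that $c_i + c_k + c_l + c_m$ is odd and $c_k + c_l + c_m < c_2 + c_3 + c_4$. Then $c_3 = c_4 = 0$. -/
/-! If `c 3 > 0` then also `c 2 > 0`, and replacing `c 3` (if even), `c 2` (if even), or both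
(if both are odd) by the zeros `c 8`, resp. `c 7, c 8`, keeps the parity of the sum and lowers it. -/

def ExistsSmallerOddTriple (c : ℕ → ℕ) : Prop :=
  ∃ i ∈ ({9, 10} : Finset ℕ), ∃ k ∈ Finset.Icc 2 8, ∃ l ∈ Finset.Icc 2 8,
    ∃ m ∈ Finset.Icc 2 8, k ≠ l ∧ k ≠ m ∧ l ≠ m ∧
    Odd (c i + c k + c l + c m) ∧ c k + c l + c m < c 2 + c 3 + c 4

lemma sum_mod_two_ne_of_lt_of_not_existsSmallerOddTriple {c : ℕ → ℕ}
    (hodd : Odd (c 9 + c 2 + c 3 + c 4)) (hmin : ¬ ExistsSmallerOddTriple c)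
    {k l m : ℕ} (hk : k ∈ Finset.Icc 2 8) (hl : l ∈ Finset.Icc 2 8) (hm : m ∈ Finset.Icc 2 8)
    (hkl : k ≠ l) (hkm : k ≠ m) (hlm : l ≠ m)
    (hlt : c k + c l + c m < c 2 + c 3 + c 4) :
    (c k + c l + c m) % 2 ≠ (c 2 + c 3 + c 4) % 2 := by
  intro hmod
  have hodd' : Odd (c 9 + c k + c l + c m) := by
    rw [Nat.odd_iff] at hodd ⊢
    omega
  exact hmin ⟨9, by simp, k, hk, l, hl, m, hm, hkl, hkm, hlm, hodd', hlt⟩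

theorem stmt_11_general (c : ℕ → ℕ)
    (h23 : c 2 ≥ c 3) (h34 : c 3 ≥ c 4)
    (h7 : c 7 = 0) (h8 : c 8 = 0)
    (hodd : Odd (c 9 + c 2 + c 3 + c 4))
    (hmin : ¬ ∃ i ∈ ({9, 10} : Finset ℕ), ∃ k ∈ Finset.Icc 2 8, ∃ l ∈ Finset.Icc 2 8,
      ∃ m ∈ Finset.Icc 2 8, k ≠ l ∧ k ≠ m ∧ l ≠ m ∧
      Odd (c i + c k + c l + c m) ∧ c k + c l + c m < c 2 + c 3 + c 4) :
    c 3 = 0 ∧ c 4 = 0 := by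
  have key := @sum_mod_two_ne_of_lt_of_not_existsSmallerOddTriple c hodd hmin
  have drop3 := key (k := 2) (l := 4) (m := 8) (by simp) (by simp) (by simp)
    (by decide) (by decide) (by decide)
  have drop2 := key (k := 3) (l := 4) (m := 8) (by simp) (by simp) (by simp)
    (by decide) (by decide) (by decide)
  have drop23 := key (k := 4) (l := 7) (m := 8) (by simp) (by simp) (by simp)
    (by decide) (by decide) (by decide)
  omega

theorem stmt_11 (c : ℕ → ℕ)
    (h23 : c 2 ≥ c 3) (h34 : c 3 ≥ c 4) (h56 : c 5 ≥ c 6)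
    (h7 : c 7 = 0) (h8 : c 8 = 0)
    (hodd : Odd (c 9 + c 2 + c 3 + c 4))
    (hmin : ¬ ∃ i ∈ ({9, 10} : Finset ℕ), ∃ k ∈ Finset.Icc 2 8, ∃ l ∈ Finset.Icc 2 8,
      ∃ m ∈ Finset.Icc 2 8, k ≠ l ∧ k ≠ m ∧ l ≠ m ∧
      Odd (c i + c k + c l + c m) ∧ c k + c l + c m < c 2 + c 3 + c 4) :
    c 3 = 0 ∧ c 4 = 0 :=
  stmt_11_general c h23 h34 h7 h8 hodd hmin
end
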